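/- For every real ξ ≠ 0 and every Schwartz function φ : ℝ → ℂ, the function x ↦ ∫_ℝ e^{i(x−y)²/(4ξ)} φ(y) dy belongs to L²(ℝ, ℂ) and its L² norm equals 2 √(π|ξ|) · ‖φ‖_{L²}. In particular, the convolution operator with kernel e^{i(x−y)²/(4ξ)} extends to a bounded operator on L²(ℝ, ℂ) of norm 2√(π|ξ|). -/

import Mathlib

/-!
Expanding `(x - y)² = x² - 2xy + y²` factors the kernel as `g(x) e^{-ixy/(2ξ)} g(y)` with the
unimodular chirp `g(t) = e^{it²/(4ξ)}`. Hence the convolution equals `g(x) · 𝓕(g φ)(x / (4πξ))`,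
where `g φ` is again a Schwartz function. Multiplying by `g` preserves `L²` norms, Plancherel
gives `‖𝓕(g φ)‖₂ = ‖φ‖₂`, and the dilation by `4πξ` contributes the factor `√(4π|ξ|)`.
-/

open MeasureTheory Complex FourierTransform
open scoped ENNReal

theorem iteratedDeriv_cexp_ofReal_mul_I (n : ℕ) :
    iteratedDeriv n (fun t : ℝ => cexp (t * I)) = fun t : ℝ => I ^ n * cexp (t * I) := by
  induction n with
  | zero => simp
  | succ n ih =>
    funext t
    rw [iteratedDeriv_succ, ih]
    have h := (((hasDerivAt_id t).ofReal_comp.mul_const I).cexp).const_mul (I ^ n)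
    simp only [id] at h
    rw [h.deriv]
    push_cast
    ring

theorem hasTemperateGrowth_cexp_ofReal_mul_I :
    Function.HasTemperateGrowth (fun t : ℝ => cexp (t * I)) := by
  refine ⟨(ofRealCLM.contDiff.mul contDiff_const).cexp, fun n => ⟨0, 1, fun t => ?_⟩⟩
  rw [norm_iteratedFDeriv_eq_norm_iteratedDeriv, iteratedDeriv_cexp_ofReal_mul_I]
  simp [norm_exp_ofReal_mul_I]

theorem SchwartzMap.eLpNorm_fourier_two {V H : Type*} [NormedAddCommGroup V]
    [InnerProductSpace ℝ V] [FiniteDimensional ℝ V] [MeasurableSpace V] [BorelSpace V]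
    [NormedAddCommGroup H] [InnerProductSpace ℂ H] [CompleteSpace H] (f : SchwartzMap V H) :
    eLpNorm (𝓕 ⇑f) 2 volume = eLpNorm f 2 volume := by
  have h := SchwartzMap.norm_fourier_toL2_eq f
  rw [SchwartzMap.norm_toLp, SchwartzMap.norm_toLp, SchwartzMap.fourier_coe] at h
  exact (ENNReal.toReal_eq_toReal_iff' ((𝓕 f).memLp 2 volume).eLpNorm_ne_top
    (f.memLp 2 volume).eLpNorm_ne_top).1 h

theorem eLpNorm_comp_mul_right {E : Type*} [NormedAddCommGroup E] {f : ℝ → E}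
    (hf : AEStronglyMeasurable f volume) {a : ℝ} (ha : a ≠ 0) {p : ℝ≥0∞} (hp : p ≠ ∞) :
    eLpNorm (fun x => f (x * a)) p volume
      = ENNReal.ofReal |a⁻¹| ^ (1 / p).toReal * eLpNorm f p volume := by
  have hmap := Real.map_volume_mul_right ha
  rw [← Function.comp_def, ← eLpNorm_map_measure (hmap ▸ hf.smul_measure _)
    (measurable_mul_const a).aemeasurable, hmap, eLpNorm_smul_measure_of_ne_top hp, smul_eq_mul]

noncomputable def chirp (ξ x : ℝ) : ℂ := cexp (I * x ^ 2 / (4 * ξ))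

theorem chirp_eq_cexp_ofReal_mul_I (ξ x : ℝ) :
    chirp ξ x = cexp (((x ^ 2 / (4 * ξ) : ℝ) : ℂ) * I) := by
  rw [chirp]
  push_cast
  ring_nf

theorem norm_chirp (ξ x : ℝ) : ‖chirp ξ x‖ = 1 := by
  rw [chirp_eq_cexp_ofReal_mul_I, norm_exp_ofReal_mul_I]

theorem hasTemperateGrowth_chirp (ξ : ℝ) : (chirp ξ).HasTemperateGrowth := by
  have hquad : Function.HasTemperateGrowth (fun x : ℝ => x ^ 2 / (4 * ξ)) := by
    simp_rw [div_eq_mul_inv]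
    fun_prop
  rw [show chirp ξ = _ ∘ _ from funext (chirp_eq_cexp_ofReal_mul_I ξ)]
  exact hasTemperateGrowth_cexp_ofReal_mul_I.comp hquad

theorem eLpNorm_chirp_mul (ξ : ℝ) (f : ℝ → ℂ) (p : ℝ≥0∞) (μ : Measure ℝ) :
    eLpNorm (fun x => chirp ξ x * f x) p μ = eLpNorm f p μ :=
  eLpNorm_congr_norm_ae <| .of_forall fun x => by rw [norm_mul, norm_chirp, one_mul]

theorem integral_cexp_I_mul_sub_sq_mul (ξ : ℝ) (φ : ℝ → ℂ) (x : ℝ) :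
    ∫ y : ℝ, cexp (I * ((x : ℂ) - (y : ℂ)) ^ 2 / (4 * (ξ : ℂ))) * φ y
      = chirp ξ x * 𝓕 (fun y => chirp ξ y * φ y) (x * (4 * Real.pi * ξ)⁻¹) := by
  rw [Real.fourier_real_eq_integral_exp_smul, ← integral_const_mul]
  congr 1 with y
  rcases eq_or_ne ξ 0 with rfl | hξ
  · simp [chirp]
  rw [smul_eq_mul, chirp, chirp, ← mul_assoc, ← mul_assoc, ← exp_add, ← exp_add]
  congr 2
  have hπ : (Real.pi : ℂ) ≠ 0 := ofReal_ne_zero.2 Real.pi_ne_zero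
  push_cast
  field_simp
  ring

/-- For every real `ξ ≠ 0` and every Schwartz function `φ`, the
function `x ↦ ∫_ℝ e^{i(x−y)²/(4ξ)} φ(y) dy` belongs to `L²(ℝ, ℂ)` and its `L²` norm
equals `2√(π|ξ|) · ‖φ‖_{L²}`.  (In particular the convolution operator with kernel
`e^{i(x−y)²/(4ξ)}` extends to a bounded operator on `L²(ℝ, ℂ)` of norm `2√(π|ξ|)`.) -/
theorem fresnel_convolution_L2_norm
    (ξ : ℝ) (hξ : ξ ≠ 0) (φ : SchwartzMap ℝ ℂ) :
    MemLp (fun x : ℝ => ∫ y : ℝ,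
        Complex.exp (Complex.I * ((x : ℂ) - (y : ℂ)) ^ 2 / (4 * (ξ : ℂ))) * φ y)
      2 (volume : Measure ℝ) ∧
    eLpNorm (fun x : ℝ => ∫ y : ℝ,
        Complex.exp (Complex.I * ((x : ℂ) - (y : ℂ)) ^ 2 / (4 * (ξ : ℂ))) * φ y)
      2 (volume : Measure ℝ)
      = ENNReal.ofReal (2 * Real.sqrt (Real.pi * |ξ|)) *
          eLpNorm (⇑φ) 2 (volume : Measure ℝ) := by
  set ψ := SchwartzMap.smulLeftCLM ℂ (chirp ξ) φ
  have hψ : ⇑ψ = fun y => chirp ξ y * φ y :=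
    SchwartzMap.smulLeftCLM_apply (hasTemperateGrowth_chirp ξ) φ
  have ha : (4 * Real.pi * ξ)⁻¹ ≠ 0 := by positivity
  have hscale : ENNReal.ofReal |((4 * Real.pi * ξ)⁻¹)⁻¹| ^ (1 / (2 : ℝ≥0∞)).toReal
      = ENNReal.ofReal (2 * Real.sqrt (Real.pi * |ξ|)) := by
    rw [inv_inv, abs_mul, abs_mul, abs_of_pos Real.pi_pos, abs_of_pos four_pos, mul_assoc,
      ENNReal.ofReal_rpow_of_nonneg (by positivity) (by norm_num), Real.sqrt_eq_rpow,
      Real.mul_rpow four_pos.le (by positivity), show (4 : ℝ) = 2 ^ (2 : ℝ) by norm_num,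
      ← Real.rpow_mul zero_le_two]
    norm_num
  simp_rw [integral_cexp_I_mul_sub_sq_mul, ← hψ]
  have hnorm : eLpNorm (fun x => chirp ξ x * 𝓕 ⇑ψ (x * (4 * Real.pi * ξ)⁻¹)) 2 volume
      = ENNReal.ofReal (2 * Real.sqrt (Real.pi * |ξ|)) * eLpNorm φ 2 volume := by
    rw [eLpNorm_chirp_mul, eLpNorm_comp_mul_right (𝓕 ψ).continuous.aestronglyMeasurable ha
      ENNReal.ofNat_ne_top, hscale, SchwartzMap.eLpNorm_fourier_two, hψ,
      eLpNorm_chirp_mul]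
  refine ⟨⟨?_, ?_⟩, hnorm⟩
  · exact ((hasTemperateGrowth_chirp ξ).1.continuous.mul
      ((𝓕 ψ).continuous.comp (continuous_mul_const _))).aestronglyMeasurable
  · rw [hnorm]
    exact ENNReal.mul_lt_top ENNReal.ofReal_lt_top (φ.memLp 2 volume).eLpNorm_lt_top
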